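/- For N a power of two, the product of the N commuting Givens rotations G^{(2i-1)(2i)}(π/4) (for i = 1,...,N), each rotating the coordinate pair (2i-1, 2i) by angle π/4, applied to the 2N×2N Hadamard rotation matrix H_{2N}, equals H_N ⊗ I_2: [∏_{i=1}^N G^{(2i-1)(2i)}(π/4)] · H_{2N} = H_N ⊗ I_2. -/

import Mathlib

/-!
Read both sides in the basis indexed by `Fin N × Fin 2`, `(i, a) ↦ 2 i + a`. There the Givens
rotations act on disjoint `2 × 2` diagonal blocks: rotating block `i` by `θ i` gives a
block-diagonal matrix `blockRot θ`, and `θ ↦ blockRot θ` turns addition of angle vectors into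
matrix multiplication, so the product of the `N` rotations is `blockRot (fun _ => π/4) = I_N ⊗ R`
with `R` the rotation by `π/4`. Kronecker associativity moves the `H₂` factor of `H_{2N}` to the
right, `H_{2N} = H_N ⊗ H₂`, and the mixed-product rule gives `(I_N ⊗ R)(H_N ⊗ H₂) = H_N ⊗ R H₂`,
where `R H₂ = I₂`.
-/

open Matrix

/-- The 2×2 Hadamard rotation matrix `H₂ = (1/√2)[[1,1],[-1,1]]`. -/
noncomputable def H2 : Matrix (Fin 2) (Fin 2) ℝ :=
  (1 / Real.sqrt 2) • !![1, 1; -1, 1]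

/-- The recursively defined Hadamard rotation matrices
`H_{2^ℓ} = H₂ ⊗ H_{2^{ℓ-1}}` (Kronecker product), with `H_1 = (1)`. -/
noncomputable def Had : (ℓ : ℕ) → Matrix (Fin (2 ^ ℓ)) (Fin (2 ^ ℓ)) ℝ
  | 0 => 1
  | (ℓ + 1) =>
      Matrix.reindex (finProdFinEquiv.trans (finCongr (pow_succ' 2 ℓ).symm))
        (finProdFinEquiv.trans (finCongr (pow_succ' 2 ℓ).symm))
        (Matrix.kroneckerMap (· * ·) H2 (Had ℓ))

/-- The `n×n` Givens rotation matrix acting as `[[cos φ, -sin φ],[sin φ, cos φ]]`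
on the coordinate pair `(a, b)` and as the identity elsewhere. -/
noncomputable def givens (n : ℕ) (a b : Fin n) (φ : ℝ) : Matrix (Fin n) (Fin n) ℝ :=
  fun p q =>
    if p = a ∧ q = a then Real.cos φ
    else if p = a ∧ q = b then -Real.sin φ
    else if p = b ∧ q = a then Real.sin φ
    else if p = b ∧ q = b then Real.cos φ
    else if p = q then 1 else 0

open scoped Kronecker

abbrev finPairEquiv {N n : ℕ} (h : N * 2 = n) : Fin N × Fin 2 ≃ Fin n :=
  finProdFinEquiv.trans (finCongr h)

theorem Had_succ_eq_kronecker_H2 (m : ℕ) :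
    Had (m + 1) = reindex (finPairEquiv (pow_succ 2 m).symm) (finPairEquiv (pow_succ 2 m).symm)
      (Had m ⊗ₖ H2) := by
  induction m with
  | zero =>
    ext p q
    simp only [Had, reindex_apply, submatrix_apply, kroneckerMap_apply, one_apply,
      Subsingleton.elim (α := Fin 1) _ 0, if_true, one_mul, mul_one]
    fin_cases p <;> fin_cases q <;> rfl
  | succ m ih =>
    rw [Had.eq_2 (m + 1)]
    conv_lhs => rw [ih]
    conv_rhs => rw [Had.eq_2 m]
    -- both sides are now reindexings of `H₂ ⊗ Had m ⊗ H₂`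
    rw [kroneckerMap_reindex_left, kroneckerMap_reindex_right, ← kronecker_assoc]
    simp only [← Equiv.trans_apply, reindex_trans]
    congr 2 <;> ext ⟨a, i, b⟩ <;> simp [finProdFinEquiv_apply_val] <;> ring

noncomputable def rot (φ : ℝ) : Matrix (Fin 2) (Fin 2) ℝ :=
  !![Real.cos φ, -Real.sin φ; Real.sin φ, Real.cos φ]

theorem rot_zero : rot 0 = 1 := by
  ext i j
  fin_cases i <;> fin_cases j <;> simp [rot]

theorem rot_add (φ ψ : ℝ) : rot (φ + ψ) = rot φ * rot ψ := by
  ext i j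
  fin_cases i <;> fin_cases j <;> simp [rot, mul_apply, Real.cos_add, Real.sin_add] <;> ring

theorem rot_pi_div_four_mul_H2 : rot (Real.pi / 4) * H2 = 1 := by
  have hsq : Real.sqrt 2 ^ 2 = 2 := Real.sq_sqrt (by norm_num)
  ext i j
  fin_cases i <;> fin_cases j <;> simp [rot, H2, mul_apply] <;> field_simp <;> linarith

section BlockRot

variable {ι : Type*} [DecidableEq ι]

noncomputable def blockRot (θ : ι → ℝ) : Matrix (ι × Fin 2) (ι × Fin 2) ℝ :=
  reindex (Equiv.prodComm _ _) (Equiv.prodComm _ _) (blockDiagonal fun i => rot (θ i))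

theorem blockRot_zero : blockRot (0 : ι → ℝ) = 1 := by
  simp only [blockRot, Pi.zero_apply, rot_zero]
  rw [← Pi.one_def, blockDiagonal_one, reindex_apply, submatrix_one_equiv]

theorem blockRot_add [Fintype ι] (θ ψ : ι → ℝ) : blockRot (θ + ψ) = blockRot θ * blockRot ψ := by
  simp only [blockRot, Pi.add_apply, rot_add, blockDiagonal_mul, ← coe_reindexAlgEquiv ℝ, map_mul]

theorem blockRot_list_sum [Fintype ι] (l : List (ι → ℝ)) :
    blockRot l.sum = (l.map blockRot).prod := by
  induction l with
  | nil => exact blockRot_zero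
  | cons θ l ih => rw [List.sum_cons, blockRot_add, ih, List.map_cons, List.prod_cons]

theorem blockRot_const (φ : ℝ) : blockRot (fun _ : ι => φ) = 1 ⊗ₖ rot φ :=
  (one_kronecker _).symm

theorem givens_eq_reindex_blockRot {n : ℕ} (e : ι × Fin 2 ≃ Fin n) (i : ι) (φ : ℝ) :
    givens n (e (i, 0)) (e (i, 1)) φ = reindex e e (blockRot (Pi.single i φ)) := by
  ext p q
  obtain ⟨⟨k, a⟩, rfl⟩ := e.surjective p
  obtain ⟨⟨l, b⟩, rfl⟩ := e.surjective q
  simp only [givens, reindex_apply, submatrix_apply, Equiv.symm_apply_apply, e.apply_eq_iff_eq,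
    blockRot, blockDiagonal_apply, Pi.single_apply]
  by_cases hk : k = i <;> by_cases hl : l = i <;> subst_vars <;>
    fin_cases a <;> fin_cases b <;> simp [rot, *, Ne.symm]

end BlockRot

theorem prod_ofFn_blockRot_single {N : ℕ} (φ : ℝ) :
    (List.ofFn fun i : Fin N => blockRot (Pi.single i φ)).prod = blockRot fun _ => φ := by
  have h := blockRot_list_sum (List.ofFn fun i : Fin N => Pi.single i φ)
  rw [List.sum_ofFn, Finset.univ_sum_single, List.map_ofFn] at h
  exact h.symm

theorem givens_two_mul_eq_reindex_blockRot {N n : ℕ} (h : N * 2 = n) (i : Fin N) (φ : ℝ)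
    (h₀ : 2 * i.val < n) (h₁ : 2 * i.val + 1 < n) :
    givens n ⟨2 * i, h₀⟩ ⟨2 * i + 1, h₁⟩ φ
      = reindex (finPairEquiv h) (finPairEquiv h) (blockRot (Pi.single i φ)) := by
  convert givens_eq_reindex_blockRot (finPairEquiv h) i φ using 2 <;>
    ext <;> simp [finProdFinEquiv_apply_val, add_comm]

theorem prod_ofFn_givens_pairs {N n : ℕ} (h : N * 2 = n) (φ : ℝ) :
    (List.ofFn fun i : Fin N =>
        givens n ⟨2 * i, by have := i.isLt; omega⟩ ⟨2 * i + 1, by have := i.isLt; omega⟩ φ).prod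
      = reindex (finPairEquiv h) (finPairEquiv h) (1 ⊗ₖ rot φ) := by
  simp only [givens_two_mul_eq_reindex_blockRot h, ← blockRot_const, ← coe_reindexAlgEquiv ℝ ℝ]
  rw [← prod_ofFn_blockRot_single, map_list_prod, List.map_ofFn]
  rfl

/-- for `N = 2^m`, the product of the `N` commuting Givens rotations
`G^{(2i-1)(2i)}(π/4)` applied to the `2N×2N` Hadamard rotation matrix `H_{2N}`
equals `H_N ⊗ I₂`:  `[∏_{i=1}^N G^{(2i-1)(2i)}(π/4)] H_{2N} = H_N ⊗ I₂`. -/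
theorem givens_prod_had (m : ℕ) :
    (List.ofFn fun i : Fin (2 ^ m) =>
        givens (2 ^ (m + 1))
          ⟨2 * i.val, by have := i.isLt; have h := Nat.two_pow_succ m; omega⟩
          ⟨2 * i.val + 1, by have := i.isLt; have h := Nat.two_pow_succ m; omega⟩
          (Real.pi / 4)).prod * Had (m + 1)
      = Matrix.reindex (finProdFinEquiv.trans (finCongr (pow_succ 2 m).symm))
          (finProdFinEquiv.trans (finCongr (pow_succ 2 m).symm))
          (Matrix.kroneckerMap (· * ·) (Had m) (1 : Matrix (Fin 2) (Fin 2) ℝ)) := by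
  rw [prod_ofFn_givens_pairs (pow_succ 2 m).symm, Had_succ_eq_kronecker_H2,
    ← coe_reindexAlgEquiv ℝ ℝ, ← map_mul, ← mul_kronecker_mul, one_mul, rot_pi_div_four_mul_H2]
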